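/- Let k ≥ 1 and let Q be a finite set of size 2k+1 equipped with a binary operation ∘ that is commutative (a∘b = b∘a), idempotent (a∘a = a), and such that for every a ∈ Q the map x ↦ a∘x is a bijection of Q. Define a 3-uniform hypergraph on the vertex set Q × {0,1,2} whose edges are: {(a,0),(a,1),(a,2)} for each a ∈ Q (Type 1), and {(a,i),(b,i),(a∘b, i+1 mod 3)} for all distinct a, b ∈ Q and each i ∈ {0,1,2} (Type 2). Then this hypergraph is a Steiner triple system on 6k+3 vertices, i.e., every pair of distinct vertices of Q × {0,1,2} is contained in exactly one edge. -/
import Mathlib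


universe u

/-- `E` is the edge set of a Steiner triple system on `V`: every edge has three vertices and
every pair of distinct vertices is contained in exactly one edge. -/
def IsSTS {V : Type u} (E : Finset (Finset V)) : Prop :=
  (∀ e ∈ E, e.card = 3) ∧
  ∀ x y : V, x ≠ y → ∃! e, e ∈ E ∧ x ∈ e ∧ y ∈ e

/-- The edge set of the Bose construction on `Q × {0,1,2}` from a binary operation `∘` on `Q`:
Type 1 edges `{(a,0),(a,1),(a,2)}` for `a ∈ Q`, and Type 2 edges
`{(a,i),(b,i),(a∘b, i+1 mod 3)}` for distinct `a, b ∈ Q` and `i ∈ {0,1,2}`. -/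
def boseEdges {Q : Type u} [Fintype Q] [DecidableEq Q] (op : Q → Q → Q) :
    Finset (Finset (Q × Fin 3)) :=
  (Finset.univ.image fun a : Q =>
    ({(a, 0), (a, 1), (a, 2)} : Finset (Q × Fin 3))) ∪
  ((Finset.univ.filter fun p : Q × Q × Fin 3 => p.1 ≠ p.2.1).image fun p =>
    ({(p.1, p.2.2), (p.2.1, p.2.2), (op p.1 p.2.1, p.2.2 + 1)} : Finset (Q × Fin 3)))

section Bose

variable {Q : Type u} [Fintype Q] [DecidableEq Q] {op : Q → Q → Q}

lemma mem_boseEdges {e : Finset (Q × Fin 3)} :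
    e ∈ boseEdges op ↔
      (∃ a, e = {(a, 0), (a, 1), (a, 2)}) ∨
      ∃ a b, ∃ i : Fin 3, a ≠ b ∧ e = {(a, i), (b, i), (op a b, i + 1)} := by
  simp only [boseEdges, Finset.mem_union, Finset.mem_image, Finset.mem_filter,
    Finset.mem_univ, true_and]
  constructor
  · rintro (⟨a, rfl⟩ | ⟨⟨a, b, i⟩, hab, rfl⟩)
    · exact Or.inl ⟨a, rfl⟩
    · exact Or.inr ⟨a, b, i, hab, rfl⟩
  · rintro (⟨a, rfl⟩ | ⟨a, b, i, hab, rfl⟩)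
    · exact Or.inl ⟨a, rfl⟩
    · exact Or.inr ⟨⟨a, b, i⟩, hab, rfl⟩

lemma fin3_succ_ne (l : Fin 3) : l + 1 ≠ l := by fin_cases l <;> decide

lemma fin3_succ_succ_ne (l : Fin 3) : l + 1 + 1 ≠ l := by fin_cases l <;> decide

lemma fin3_resolve {i j : Fin 3} (h : i ≠ j) : j = i + 1 ∨ i = j + 1 := by
  revert h; fin_cases i <;> fin_cases j <;> decide

variable (hcomm : ∀ a b, op a b = op b a) (hidem : ∀ a, op a a = a)
    (hbij : ∀ a, Function.Bijective fun x => op a x)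

section
include hbij

lemma op_cancel {a x y : Q} (h : op a x = op a y) : x = y := (hbij a).1 h

include hidem

lemma op_ne_left {a b : Q} (h : op a b = a) : b = a := op_cancel hbij (h.trans (hidem a).symm)

end

include hcomm in
/-- Same-level pairs. -/
lemma bose_same (hab : a ≠ b) (i : Fin 3) :
    ∃! e, e ∈ boseEdges op ∧ (a, i) ∈ e ∧ (b, i) ∈ e := by
  refine ⟨{(a, i), (b, i), (op a b, i + 1)}, ⟨?_, by simp, by simp⟩, ?_⟩
  · exact mem_boseEdges.2 (Or.inr ⟨a, b, i, hab, rfl⟩)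
  · rintro e ⟨he, hx, hy⟩
    rcases mem_boseEdges.1 he with ⟨c, rfl⟩ | ⟨c, d, l, hcd, rfl⟩
    · exfalso
      simp only [Finset.mem_insert, Finset.mem_singleton, Prod.mk.injEq] at hx hy
      rcases hx with ⟨rfl, _⟩ | ⟨rfl, _⟩ | ⟨rfl, _⟩ <;>
        rcases hy with ⟨h, _⟩ | ⟨h, _⟩ | ⟨h, _⟩ <;> exact hab h.symm
    · simp only [Finset.mem_insert, Finset.mem_singleton, Prod.mk.injEq] at hx hy
      rcases hx with ⟨rfl, rfl⟩ | ⟨rfl, rfl⟩ | ⟨h1, h2⟩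
      · rcases hy with ⟨h3, _⟩ | ⟨rfl, _⟩ | ⟨_, h4⟩
        · exact absurd h3.symm hab
        · rfl
        · exact absurd h4.symm (fin3_succ_ne i)
      · rcases hy with ⟨rfl, _⟩ | ⟨h3, _⟩ | ⟨_, h4⟩
        · rw [hcomm b a, Finset.insert_comm]
        · exact absurd h3.symm hab
        · exact absurd h4.symm (fin3_succ_ne i)
      · rcases hy with ⟨_, h4⟩ | ⟨_, h4⟩ | ⟨h3, _⟩
        · exact absurd (h2.symm.trans h4) (fin3_succ_ne l)
        · exact absurd (h2.symm.trans h4) (fin3_succ_ne l)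
        · exact absurd (h1.trans h3.symm) hab

include hcomm hidem hbij in
/-- Same-point, different level. -/
lemma bose_diag (a : Q) {i j : Fin 3} (hij : i ≠ j) :
    ∃! e, e ∈ boseEdges op ∧ (a, i) ∈ e ∧ (a, j) ∈ e := by
  refine ⟨{(a, 0), (a, 1), (a, 2)}, ⟨?_, ?_, ?_⟩, ?_⟩
  · exact mem_boseEdges.2 (Or.inl ⟨a, rfl⟩)
  · fin_cases i <;> simp
  · fin_cases j <;> simp
  · rintro e ⟨he, hx, hy⟩
    rcases mem_boseEdges.1 he with ⟨c, rfl⟩ | ⟨c, d, l, hcd, rfl⟩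
    · simp only [Finset.mem_insert, Finset.mem_singleton, Prod.mk.injEq] at hx
      rcases hx with ⟨rfl, _⟩ | ⟨rfl, _⟩ | ⟨rfl, _⟩ <;> rfl
    · exfalso
      simp only [Finset.mem_insert, Finset.mem_singleton, Prod.mk.injEq] at hx hy
      rcases hx with ⟨rfl, rfl⟩ | ⟨rfl, rfl⟩ | ⟨h1, h2⟩
      · rcases hy with ⟨_, h4⟩ | ⟨h3, _⟩ | ⟨h3, _⟩
        · exact hij h4.symm
        · exact hcd (h3 ▸ rfl)
        · exact hcd (op_ne_left hidem hbij h3.symm).symm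
      · rcases hy with ⟨h3, _⟩ | ⟨_, h4⟩ | ⟨h3, _⟩
        · exact hcd (h3 ▸ rfl)
        · exact hij h4.symm
        · exact hcd (op_ne_left hidem hbij ((hcomm c a).symm.trans h3.symm))
      · rcases hy with ⟨rfl, h4⟩ | ⟨rfl, h4⟩ | ⟨_, h4⟩
        · exact hcd (op_ne_left hidem hbij h1.symm).symm
        · exact hcd (op_ne_left hidem hbij ((hcomm a c).trans h1.symm))
        · exact hij (h2.trans h4.symm)

include hcomm hidem hbij in
/-- Cross-level pairs: `(a,i)` and `(b,i+1)`, `a ≠ b`. -/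
lemma bose_cross (hab : a ≠ b) (i : Fin 3) :
    ∃! e, e ∈ boseEdges op ∧ (a, i) ∈ e ∧ (b, i + 1) ∈ e := by
  obtain ⟨d, hd⟩ := (hbij a).2 b
  simp only at hd
  have hda : d ≠ a := by
    rintro rfl
    exact hab ((hidem d).symm.trans hd)
  refine ⟨{(a, i), (d, i), (op a d, i + 1)}, ⟨?_, by simp, by simp [hd]⟩, ?_⟩
  · exact mem_boseEdges.2 (Or.inr ⟨a, d, i, Ne.symm hda, rfl⟩)
  · rintro e ⟨he, hx, hy⟩
    rcases mem_boseEdges.1 he with ⟨c, rfl⟩ | ⟨c, d', l, hcd, rfl⟩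
    · exfalso
      simp only [Finset.mem_insert, Finset.mem_singleton, Prod.mk.injEq] at hx hy
      rcases hx with ⟨rfl, _⟩ | ⟨rfl, _⟩ | ⟨rfl, _⟩ <;>
        rcases hy with ⟨h, _⟩ | ⟨h, _⟩ | ⟨h, _⟩ <;> exact hab h.symm
    · simp only [Finset.mem_insert, Finset.mem_singleton, Prod.mk.injEq] at hx hy
      rcases hx with ⟨rfl, rfl⟩ | ⟨rfl, rfl⟩ | ⟨h1, h2⟩
      · rcases hy with ⟨_, h4⟩ | ⟨_, h4⟩ | ⟨h3, _⟩
        · exact absurd h4 (fin3_succ_ne i)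
        · exact absurd h4 (fin3_succ_ne i)
        · obtain rfl : d' = d := (op_cancel hbij (hd.trans h3)).symm
          rfl
      · rcases hy with ⟨_, h4⟩ | ⟨_, h4⟩ | ⟨h3, _⟩
        · exact absurd h4 (fin3_succ_ne i)
        · exact absurd h4 (fin3_succ_ne i)
        · have hdc : d = c := op_cancel hbij (hd.trans (h3.trans (hcomm c a)))
          rw [← hdc, hcomm d a, Finset.insert_comm]
      · rcases hy with ⟨_, h4⟩ | ⟨_, h4⟩ | ⟨_, h4⟩
        · exact absurd (h2 ▸ h4 : l + 1 + 1 = l) (fin3_succ_succ_ne l)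
        · exact absurd (h2 ▸ h4 : l + 1 + 1 = l) (fin3_succ_succ_ne l)
        · obtain rfl : i = l := add_right_cancel h4
          exact absurd h2.symm (fin3_succ_ne i)

lemma bose_card {e : Finset (Q × Fin 3)} (he : e ∈ boseEdges op) : e.card = 3 := by
  rcases mem_boseEdges.1 he with ⟨a, rfl⟩ | ⟨a, b, i, hab, rfl⟩
  · rw [Finset.card_insert_of_notMem (by simp), Finset.card_insert_of_notMem (by simp),
      Finset.card_singleton]
  · rw [Finset.card_insert_of_notMem, Finset.card_insert_of_notMem, Finset.card_singleton]
    · simp [Ne.symm (fin3_succ_ne i)]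
    · simp [hab, Ne.symm (fin3_succ_ne i)]

end Bose

/-- Bose construction: if `Q` has size `2k+1` and `∘` is a commutative idempotent binary
operation on `Q` such that `x ↦ a∘x` is a bijection for every `a` (i.e. `(Q, ∘)` is a
commutative idempotent quasigroup), then the Bose hypergraph on `Q × {0,1,2}` is a Steiner
triple system on `6k+3` vertices. -/
theorem stmt17 {Q : Type u} [Fintype Q] [DecidableEq Q] (k : ℕ) (hk : 1 ≤ k)
    (hQ : Fintype.card Q = 2 * k + 1)
    (op : Q → Q → Q)
    (hcomm : ∀ a b, op a b = op b a)
    (hidem : ∀ a, op a a = a)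
    (hbij : ∀ a, Function.Bijective fun x => op a x) :
    Fintype.card (Q × Fin 3) = 6 * k + 3 ∧ IsSTS (boseEdges op) := by
  refine ⟨by simp [hQ]; ring, fun e he => bose_card he, fun x y hxy => ?_⟩
  obtain ⟨a, i⟩ := x
  obtain ⟨b, j⟩ := y
  by_cases hij : i = j
  · subst hij
    have hab : a ≠ b := fun h => hxy (by rw [h])
    exact bose_same hcomm hab i
  · by_cases hab : a = b
    · subst hab
      exact bose_diag hcomm hidem hbij a hij
    · rcases fin3_resolve hij with rfl | rfl
      · exact bose_cross hcomm hidem hbij hab i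
      · have := bose_cross hcomm hidem hbij (Ne.symm hab) j
        exact (existsUnique_congr (fun e => by tauto)).mp this
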